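/- arXiv:2509.08783 — 10 statements merged into one kernel-verified Lean document; each statement's English description precedes it below -/
import Mathlib

section
/- Let A ∈ ℝ^{n×n}, C ∈ ℝ^{p×n}, and let W ⊆ ℝⁿ be a subspace. Then W is (C,A)-invariant, i.e., there exists L ∈ ℝ^{n×p} such that (A + LC)W ⊆ W, if and only if A(W ∩ ker C) ⊆ W. -/
open Matrix

/-- A subspace `W ⊆ ℝⁿ` is `(C,A)`-invariant (i.e. there exists an
output-injection matrix `L` with `(A + LC)W ⊆ W`) if and only if `A (W ∩ ker C) ⊆ W`. -/
theorem CA_invariant_iff (n p : ℕ)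
    (A : Matrix (Fin n) (Fin n) ℝ) (C : Matrix (Fin p) (Fin n) ℝ)
    (W : Submodule ℝ (Fin n → ℝ)) :
    (∃ L : Matrix (Fin n) (Fin p) ℝ, ∀ x ∈ W, (A + L * C).mulVec x ∈ W) ↔
      Submodule.map A.mulVecLin (W ⊓ LinearMap.ker C.mulVecLin) ≤ W := by
  set f := A.mulVecLin with hf
  set g := C.mulVecLin with hg
  constructor
  · rintro ⟨L, hL⟩ y ⟨x, ⟨hxW, hxK⟩, rfl⟩
    have hx := hL x hxW
    have hCx : C *ᵥ x = 0 := hxK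
    rw [Matrix.add_mulVec, ← Matrix.mulVec_mulVec, hCx, Matrix.mulVec_zero, add_zero] at hx
    exact hx
  · intro h
    set U : Submodule ℝ (Fin n → ℝ) := W ⊓ LinearMap.ker g with hU
    obtain ⟨S', hS'⟩ := Submodule.exists_isCompl (U.comap W.subtype)
    set S : Submodule ℝ (Fin n → ℝ) := S'.map W.subtype with hS
    have hSW : S ≤ W := by
      rintro x ⟨⟨y, hy⟩, -, rfl⟩; exact hy
    have hUS : U ⊔ S = W := by
      have h1 : U.comap W.subtype ⊔ S' = ⊤ := hS'.sup_eq_top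
      have h2 := congrArg (Submodule.map W.subtype) h1
      rw [Submodule.map_sup, Submodule.map_top, Submodule.range_subtype,
        Submodule.map_comap_eq, Submodule.range_subtype] at h2
      rw [inf_of_le_right (inf_le_left : U ≤ W)] at h2
      exact h2
    set gS : S →ₗ[ℝ] (Fin p → ℝ) := g.comp S.subtype with hgS
    have hinj : Function.Injective gS := by
      rw [← LinearMap.ker_eq_bot, eq_bot_iff]
      rintro ⟨x, hx⟩ hker
      have hgx : g x = 0 := hker
      obtain ⟨y, hyS', hyx⟩ := hx
      have hyU : y ∈ U.comap W.subtype := by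
        refine Submodule.mem_comap.mpr ⟨y.2, ?_⟩
        show g (W.subtype y) = 0
        rw [hyx]; exact hgx
      have hy0 : y ∈ (⊥ : Submodule ℝ W) := hS'.inf_eq_bot ▸ ⟨hyU, hyS'⟩
      have hy00 : (y : Fin n → ℝ) = 0 := by
        rw [Submodule.mem_bot] at hy0; rw [hy0]; rfl
      have hx0 : x = 0 := by rw [← hyx]; exact hy00
      simp only [Submodule.mem_bot]
      exact Subtype.ext (by simpa using hx0)
    set V := LinearMap.range gS with hV
    set e : ↥S ≃ₗ[ℝ] ↥V := LinearEquiv.ofInjective gS hinj with he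
    obtain ⟨V', hV'⟩ := Submodule.exists_isCompl V
    set proj := V.linearProjOfIsCompl V' hV' with hproj
    set m : V →ₗ[ℝ] (Fin n → ℝ) := -((f.comp S.subtype).comp e.symm.toLinearMap) with hm
    set ℓ := m.comp proj with hℓ
    refine ⟨LinearMap.toMatrix' ℓ, ?_⟩
    intro x hxW
    rw [← hUS] at hxW
    obtain ⟨u, hu, s, hs, rfl⟩ := Submodule.mem_sup.mp hxW
    have hfu : f u ∈ W := h ⟨u, hu, rfl⟩
    have hmat : ∀ v, (LinearMap.toMatrix' ℓ) *ᵥ v = ℓ v := by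
      intro v; rw [← Matrix.toLin'_apply, Matrix.toLin'_toMatrix']
    have key : (A + LinearMap.toMatrix' ℓ * C).mulVec (u + s) = f u := by
      rw [Matrix.add_mulVec, ← Matrix.mulVec_mulVec, hmat]
      have hgu : g u = 0 := hu.2
      have hgus : g (u + s) = gS ⟨s, hs⟩ := by
        show g (u + s) = g s
        rw [map_add, hgu, zero_add]
      rw [show C *ᵥ (u + s) = g (u + s) from rfl, hgus]
      have hmem : gS ⟨s, hs⟩ ∈ V := LinearMap.mem_range_self _ _
      have hprojval : proj (gS ⟨s, hs⟩) = ⟨gS ⟨s, hs⟩, hmem⟩ :=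
        Submodule.linearProjOfIsCompl_apply_left hV' ⟨gS ⟨s, hs⟩, hmem⟩
      have heq : (⟨gS ⟨s, hs⟩, hmem⟩ : V) = e ⟨s, hs⟩ := by
        rw [he]
        exact Subtype.ext ((LinearEquiv.ofInjective_apply (f := gS) (h := hinj) (⟨s, hs⟩ : S)).symm)
      have hm2 : ℓ (gS ⟨s, hs⟩) = -(f s) := by
        simp only [hℓ, LinearMap.comp_apply, hprojval, heq, hm, LinearMap.neg_apply,
          LinearEquiv.coe_toLinearMap, LinearEquiv.symm_apply_apply]
        rfl
      rw [hm2]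
      rw [show A *ᵥ (u + s) = f (u + s) from rfl, map_add f u s]
      abel
    rw [key]
    exact hfu
end

section
/- Let A ∈ ℝ^{n×n}, B ∈ ℝ^{n×m}, and let V ⊆ ℝⁿ be a subspace. Then V is (A,B)-invariant, i.e., there exists F ∈ ℝ^{m×n} such that (A + BF)V ⊆ V, if and only if A V ⊆ V + Im B. -/
open Matrix

/-- A subspace `V ⊆ ℝⁿ` is `(A,B)`-invariant (i.e. there exists a
state-feedback matrix `F` with `(A + BF)V ⊆ V`) if and only if `A V ⊆ V + Im B`. -/
theorem AB_invariant_iff (n m : ℕ)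
    (A : Matrix (Fin n) (Fin n) ℝ) (B : Matrix (Fin n) (Fin m) ℝ)
    (V : Submodule ℝ (Fin n → ℝ)) :
    (∃ F : Matrix (Fin m) (Fin n) ℝ, ∀ x ∈ V, (A + B * F).mulVec x ∈ V) ↔
      Submodule.map A.mulVecLin V ≤ V ⊔ LinearMap.range B.mulVecLin := by
  constructor
  · rintro ⟨F, hF⟩ y ⟨x, hx, rfl⟩
    have h := hF x hx
    have key : A.mulVecLin x = (A + B * F).mulVec x + B.mulVec (-(F.mulVec x)) := by
      simp [Matrix.add_mulVec, Matrix.mulVec_neg, Matrix.mulVec_mulVec, Matrix.mulVecLin]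
    rw [key]
    exact Submodule.add_mem_sup h ⟨-(F.mulVec x), rfl⟩
  · intro h
    set W := V ⊔ LinearMap.range B.mulVecLin with hW
    -- the surjection (v, u) ↦ v + B u onto W
    set φ : (V × (Fin m → ℝ)) →ₗ[ℝ] (Fin n → ℝ) :=
      LinearMap.coprod V.subtype B.mulVecLin with hφ
    have hrange : LinearMap.range φ = W := by
      rw [hφ, LinearMap.range_coprod, Submodule.range_subtype]
    set φ' : (V × (Fin m → ℝ)) →ₗ[ℝ] W :=
      φ.codRestrict W (fun z => hrange ▸ LinearMap.mem_range_self φ z) with hφ'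
    have hsurj : LinearMap.range φ' = ⊤ := by
      rw [LinearMap.range_eq_top]
      intro w
      have : (w : Fin n → ℝ) ∈ LinearMap.range φ := by rw [hrange]; exact w.2
      obtain ⟨z, hz⟩ := this
      exact ⟨z, Subtype.ext hz⟩
    obtain ⟨s, hs⟩ := φ'.exists_rightInverse_of_surjective hsurj
    -- projection onto V
    obtain ⟨U, hU⟩ := Submodule.exists_isCompl V
    set p := V.linearProjOfIsCompl U hU with hp
    -- the map α : V →ₗ W, x ↦ A x
    set α : V →ₗ[ℝ] W :=
      (A.mulVecLin ∘ₗ V.subtype).codRestrict W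
        (fun x => h ⟨x, x.2, rfl⟩) with hα
    set g : (Fin n → ℝ) →ₗ[ℝ] (Fin m → ℝ) :=
      -((LinearMap.snd ℝ V (Fin m → ℝ)) ∘ₗ s ∘ₗ α ∘ₗ p) with hg
    refine ⟨LinearMap.toMatrix' g, fun x hx => ?_⟩
    have hmv : (LinearMap.toMatrix' g).mulVec x = g x := by
      rw [← Matrix.toLin'_apply, Matrix.toLin'_toMatrix']
    have hpx : p x = ⟨x, hx⟩ := Submodule.linearProjOfIsCompl_apply_left hU ⟨x, hx⟩
    -- decompose A x via the section
    set z := s (α ⟨x, hx⟩) with hz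
    have hφz : (z.1 : Fin n → ℝ) + B.mulVec z.2 = A.mulVec x := by
      have : φ' z = α ⟨x, hx⟩ := LinearMap.congr_fun hs (α ⟨x, hx⟩)
      have h2 := congrArg (Subtype.val) this
      simpa [hφ', hφ, hα, LinearMap.coprod_apply] using h2
    have hgx : g x = -z.2 := by
      simp [hg, hpx, hz]
    have : (A + B * LinearMap.toMatrix' g).mulVec x = (z.1 : Fin n → ℝ) := by
      rw [Matrix.add_mulVec, ← Matrix.mulVec_mulVec, hmv, hgx, ← hφz]
      simp [Matrix.mulVec_neg]
    rw [this]
    exact z.1.2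
end

section
/- Let A ∈ ℝ^{n×n}, C ∈ ℝ^{p×n}, and let W ⊆ ℝⁿ be a subspace, with W^⊥ its orthogonal complement with respect to the standard inner product on ℝⁿ. Then there exists L ∈ ℝ^{n×p} such that (A + LC)W ⊆ W if and only if there exists F ∈ ℝ^{p×n} such that (Aᵀ + CᵀF)W^⊥ ⊆ W^⊥. In other words, W is (C,A)-invariant if and only if W^⊥ is (Aᵀ,Cᵀ)-invariant. -/
/-!
Transposition is the adjoint for the standard inner product, `⟪x, Mᵀy⟫ = ⟪Mx, y⟫`, so `M`
leaves `W` invariant iff `Mᵀ` leaves `Wᗮ` invariant (the converse via `Wᗮᗮ = W`). Since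
`(A + LC)ᵀ = Aᵀ + CᵀLᵀ`, the output injection `L` and the feedback `F` correspond by `F = Lᵀ`.
-/

open Matrix

variable {ι : Type*} [Fintype ι]

def Matrix.LeavesInvariant (M : Matrix ι ι ℝ) (W : Submodule ℝ (EuclideanSpace ℝ ι)) : Prop :=
  ∀ x ∈ W, (WithLp.toLp 2 (M *ᵥ x) : EuclideanSpace ℝ ι) ∈ W

theorem Matrix.inner_toLp_transpose_mulVec (M : Matrix ι ι ℝ) (x y : EuclideanSpace ℝ ι) :
    inner ℝ x (WithLp.toLp 2 (Mᵀ *ᵥ y) : EuclideanSpace ℝ ι) =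
      inner ℝ (WithLp.toLp 2 (M *ᵥ x) : EuclideanSpace ℝ ι) y := by
  simp only [EuclideanSpace.inner_eq_star_dotProduct, star_trivial]
  rw [mulVec_transpose, dotProduct_mulVec, dotProduct_comm]

namespace Matrix.LeavesInvariant

variable {M : Matrix ι ι ℝ} {W : Submodule ℝ (EuclideanSpace ℝ ι)}

theorem transpose_orthogonal (h : M.LeavesInvariant W) : Mᵀ.LeavesInvariant Wᗮ :=
  fun y hy => (W.mem_orthogonal _).mpr fun x hx =>
    (inner_toLp_transpose_mulVec M x y).trans ((W.mem_orthogonal y).mp hy _ (h x hx))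

theorem transpose_orthogonal_iff : Mᵀ.LeavesInvariant Wᗮ ↔ M.LeavesInvariant W :=
  ⟨fun h => by
    simpa only [transpose_transpose, Submodule.orthogonal_orthogonal] using h.transpose_orthogonal,
   transpose_orthogonal⟩

end Matrix.LeavesInvariant

/-- **duality of invariant subspaces.** A subspace `W ⊆ ℝⁿ` is
`(C,A)`-invariant if and only if its orthogonal complement `W^⊥` (w.r.t. the standard
inner product) is `(Aᵀ,Cᵀ)`-invariant: there exists `L` with `(A + LC)W ⊆ W` iff there
exists `F` with `(Aᵀ + CᵀF)W^⊥ ⊆ W^⊥`. -/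
theorem CA_invariant_iff_dual_invariant (n p : ℕ)
    (A : Matrix (Fin n) (Fin n) ℝ) (C : Matrix (Fin p) (Fin n) ℝ)
    (W : Submodule ℝ (EuclideanSpace ℝ (Fin n))) :
    (∃ L : Matrix (Fin n) (Fin p) ℝ,
        ∀ x ∈ W, (WithLp.toLp 2 ((A + L * C).mulVec x) : EuclideanSpace ℝ (Fin n)) ∈ W) ↔
      (∃ F : Matrix (Fin p) (Fin n) ℝ,
        ∀ x ∈ Wᗮ, (WithLp.toLp 2 ((Aᵀ + Cᵀ * F).mulVec x) : EuclideanSpace ℝ (Fin n)) ∈ Wᗮ) := by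
  have transpose_closedLoop (K : Matrix (Fin n) (Fin p) ℝ) : (A + K * C)ᵀ = Aᵀ + Cᵀ * Kᵀ := by
    rw [transpose_add, transpose_mul]
  constructor
  · rintro ⟨L, hL⟩
    exact ⟨Lᵀ, transpose_closedLoop L ▸ LeavesInvariant.transpose_orthogonal hL⟩
  · rintro ⟨F, hF⟩
    refine ⟨Fᵀ, LeavesInvariant.transpose_orthogonal_iff.mp ?_⟩
    rwa [transpose_closedLoop, transpose_transpose]
end

section
/- Let A ∈ ℝ^{n×n}, C ∈ ℝ^{p×n}, and let W ⊆ ℝⁿ be a subspace with orthogonal complement W^⊥. Then A(W ∩ ker C) ⊆ W if and only if Aᵀ W^⊥ ⊆ W^⊥ + Im Cᵀ. -/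
/-! Taking orthogonal complements, `A U ⊆ W` is equivalent to `Aᵀ W^⊥ ⊆ U^⊥`, and in finite
dimension `(W ∩ ker C)^⊥ = W^⊥ + (ker C)^⊥ = W^⊥ + Im Cᵀ`. -/

open Matrix

namespace Submodule

theorem mem_sup_range_iff {R M N : Type*} [Ring R] [AddCommGroup M] [Module R M]
    [AddCommGroup N] [Module R N] {U : Submodule R M} {f : N →ₗ[R] M} {x : M} :
    x ∈ U ⊔ LinearMap.range f ↔ ∃ y, x - f y ∈ U := by
  simp only [mem_sup, LinearMap.mem_range]
  constructor
  · rintro ⟨u, hu, _, ⟨y, rfl⟩, rfl⟩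
    exact ⟨y, by simpa using hu⟩
  · rintro ⟨y, hy⟩
    exact ⟨_, hy, _, ⟨y, rfl⟩, sub_add_cancel x (f y)⟩

variable {𝕜 E F : Type*} [RCLike 𝕜] [NormedAddCommGroup E] [InnerProductSpace 𝕜 E]
  [NormedAddCommGroup F] [InnerProductSpace 𝕜 F] [FiniteDimensional 𝕜 E] [FiniteDimensional 𝕜 F]

theorem map_le_iff_map_adjoint_orthogonal_le (T : E →ₗ[𝕜] F) (U : Submodule 𝕜 E)
    (V : Submodule 𝕜 F) : U.map T ≤ V ↔ Vᗮ.map T.adjoint ≤ Uᗮ := by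
  conv_lhs => rw [← V.orthogonal_orthogonal]
  rw [← isOrtho_iff_le, ← isOrtho_iff_le, isOrtho_comm, isOrtho_iff_inner_eq,
    isOrtho_iff_inner_eq]
  simp [LinearMap.adjoint_inner_left]

theorem orthogonal_inf (U V : Submodule 𝕜 E) : (U ⊓ V)ᗮ = Uᗮ ⊔ Vᗮ := by
  rw [← (Uᗮ ⊔ Vᗮ).orthogonal_orthogonal, ← inf_orthogonal, U.orthogonal_orthogonal,
    V.orthogonal_orthogonal]

theorem orthogonal_inf_ker (U : Submodule 𝕜 E) (K : E →ₗ[𝕜] F) :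
    (U ⊓ LinearMap.ker K)ᗮ = Uᗮ ⊔ LinearMap.range K.adjoint := by
  rw [orthogonal_inf, LinearMap.orthogonal_ker]

end Submodule

theorem Matrix.toEuclideanLin_transpose_eq_adjoint {m n : Type*} [Fintype m] [Fintype n]
    [DecidableEq m] [DecidableEq n] (A : Matrix m n ℝ) :
    Aᵀ.toEuclideanLin = A.toEuclideanLin.adjoint := by
  rw [← conjTranspose_eq_transpose_of_trivial, toEuclideanLin_conjTranspose_eq_adjoint]

/-- For a subspace `W ⊆ ℝⁿ` with orthogonal complement `W^⊥`,
`A (W ∩ ker C) ⊆ W` if and only if `Aᵀ W^⊥ ⊆ W^⊥ + Im Cᵀ`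
(i.e. every `Aᵀ x` with `x ∈ W^⊥` decomposes as an element of `W^⊥` plus `Cᵀ y`). -/
theorem image_inter_ker_subset_iff_dual (n p : ℕ)
    (A : Matrix (Fin n) (Fin n) ℝ) (C : Matrix (Fin p) (Fin n) ℝ)
    (W : Submodule ℝ (EuclideanSpace ℝ (Fin n))) :
    (∀ x ∈ W, C.mulVec x = 0 → (WithLp.toLp 2 (A.mulVec x) : EuclideanSpace ℝ (Fin n)) ∈ W) ↔
      (∀ x ∈ Wᗮ, ∃ y : Fin p → ℝ,
        (WithLp.toLp 2 (Aᵀ.mulVec x - Cᵀ.mulVec y) : EuclideanSpace ℝ (Fin n)) ∈ Wᗮ) := by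
  have key := (W ⊓ LinearMap.ker C.toEuclideanLin).map_le_iff_map_adjoint_orthogonal_le
    A.toEuclideanLin W
  rw [Submodule.orthogonal_inf_ker, ← toEuclideanLin_transpose_eq_adjoint,
    ← toEuclideanLin_transpose_eq_adjoint, Submodule.map_le_iff_le_comap,
    Submodule.map_le_iff_le_comap] at key
  simp only [SetLike.le_def, Submodule.mem_inf, Submodule.mem_comap, Submodule.mem_sup_range_iff,
    LinearMap.mem_ker, toLpLin_apply, ← WithLp.toLp_sub, WithLp.toLp_eq_zero,
    (WithLp.toLp_surjective 2).exists] at key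
  simpa only [and_imp] using key
end

section
/- Let A ∈ ℝ^{n×n}, C ∈ ℝ^{p×n}, and let W₁, W₂ ⊆ ℝⁿ be subspaces each of which is (C,A)-invariant. Then the intersection W₁ ∩ W₂ is also (C,A)-invariant. -/
open Matrix

lemma CA_geom_aux (n p : ℕ) (A : Matrix (Fin n) (Fin n) ℝ) (C : Matrix (Fin p) (Fin n) ℝ)
    (W : Submodule ℝ (Fin n → ℝ))
    (h : ∀ x ∈ W, C.mulVec x = 0 → A.mulVec x ∈ W) :
    ∃ L : Matrix (Fin n) (Fin p) ℝ, ∀ x ∈ W, (A + L * C).mulVec x ∈ W := by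
  set g : W →ₗ[ℝ] (Fin p → ℝ) := (Matrix.mulVecLin C).comp W.subtype with hg
  set hm : W →ₗ[ℝ] ((Fin n → ℝ) ⧸ W) := (W.mkQ.comp (Matrix.mulVecLin A)).comp W.subtype with hhm
  have hker : LinearMap.ker g ≤ LinearMap.ker hm := by
    intro x hx
    simp only [LinearMap.mem_ker, hg, hhm, LinearMap.comp_apply, Submodule.subtype_apply,
      Matrix.mulVecLin_apply, Submodule.mkQ_apply] at hx ⊢
    exact (Submodule.Quotient.mk_eq_zero W).mpr (h x x.2 hx)
  let e := g.quotKerEquivRange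
  let M₀ : LinearMap.range g →ₗ[ℝ] ((Fin n → ℝ) ⧸ W) :=
    ((LinearMap.ker g).liftQ hm hker).comp e.symm.toLinearMap
  obtain ⟨M, hM⟩ := M₀.exists_extend
  obtain ⟨s, hs⟩ := W.mkQ.exists_rightInverse_of_surjective (by rw [Submodule.range_mkQ])
  have hMg : ∀ x : W, M (g x) = hm x := by
    intro x
    have h1 : (⟨g x, LinearMap.mem_range_self g x⟩ : LinearMap.range g) =
        e (Submodule.Quotient.mk x) := by
      apply Subtype.ext
      simp [e, LinearMap.quotKerEquivRange_apply_mk]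
    have h2 : M₀ (e (Submodule.Quotient.mk x)) = hm x := by
      simp only [M₀, LinearMap.comp_apply, LinearEquiv.coe_coe,
        LinearEquiv.symm_apply_apply, Submodule.liftQ_apply]
    have := LinearMap.congr_fun hM (⟨g x, LinearMap.mem_range_self g x⟩ : LinearMap.range g)
    simp only [LinearMap.comp_apply, Submodule.subtype_apply] at this
    rw [this, h1, h2]
  refine ⟨LinearMap.toMatrix' (-(s.comp M)), fun x hx => ?_⟩
  have hL : ∀ y, (LinearMap.toMatrix' (-(s.comp M))).mulVec y = -(s (M y)) := by
    intro y
    have := Matrix.toLin'_toMatrix' (-(s.comp M))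
    calc (LinearMap.toMatrix' (-(s.comp M))).mulVec y
        = Matrix.toLin' (LinearMap.toMatrix' (-(s.comp M))) y := rfl
      _ = (-(s.comp M)) y := by rw [this]
      _ = -(s (M y)) := rfl
  rw [Matrix.add_mulVec, ← Matrix.mulVec_mulVec, hL]
  rw [← Submodule.Quotient.mk_eq_zero W]
  have hCx : C.mulVec x = g ⟨x, hx⟩ := by simp [hg]
  rw [hCx, hMg ⟨x, hx⟩]
  have hsq : ∀ q, W.mkQ (s q) = q := fun q => LinearMap.congr_fun hs q
  have : (Submodule.Quotient.mk (A.mulVec x + -(s (hm ⟨x, hx⟩))) : (Fin n → ℝ) ⧸ W)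
      = W.mkQ (A.mulVec x) - W.mkQ (s (hm ⟨x, hx⟩)) := by
    simp [Submodule.mkQ_apply, sub_eq_add_neg, Submodule.Quotient.mk_add]
  rw [this, hsq]
  simp [hhm]

/-- The intersection of two `(C,A)`-invariant subspaces is again
`(C,A)`-invariant. -/
theorem CA_invariant_inf (n p : ℕ)
    (A : Matrix (Fin n) (Fin n) ℝ) (C : Matrix (Fin p) (Fin n) ℝ)
    (W₁ W₂ : Submodule ℝ (Fin n → ℝ))
    (h₁ : ∃ L : Matrix (Fin n) (Fin p) ℝ, ∀ x ∈ W₁, (A + L * C).mulVec x ∈ W₁)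
    (h₂ : ∃ L : Matrix (Fin n) (Fin p) ℝ, ∀ x ∈ W₂, (A + L * C).mulVec x ∈ W₂) :
    ∃ L : Matrix (Fin n) (Fin p) ℝ, ∀ x ∈ W₁ ⊓ W₂, (A + L * C).mulVec x ∈ W₁ ⊓ W₂ := by
  have key : ∀ (W : Submodule ℝ (Fin n → ℝ)),
      (∃ L : Matrix (Fin n) (Fin p) ℝ, ∀ x ∈ W, (A + L * C).mulVec x ∈ W) →
      ∀ x ∈ W, C.mulVec x = 0 → A.mulVec x ∈ W := by
    rintro W ⟨L, hL⟩ x hx hCx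
    have := hL x hx
    rwa [Matrix.add_mulVec, ← Matrix.mulVec_mulVec, hCx, Matrix.mulVec_zero, add_zero] at this
  apply CA_geom_aux
  intro x hx hCx
  exact ⟨key W₁ h₁ x hx.1 hCx, key W₂ h₂ x hx.2 hCx⟩
end

section
/- Let A ∈ ℝ^{n×n}, C ∈ ℝ^{p×n}, and let ℬ ⊆ ℝⁿ be a fixed subspace. Define W* to be the intersection of all (C,A)-invariant subspaces of ℝⁿ that contain ℬ. Then W* is itself (C,A)-invariant and contains ℬ; consequently W* is the infimal element of the class of (C,A)-invariant subspaces containing ℬ, i.e., W* is contained in every (C,A)-invariant subspace that contains ℬ. -/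
open Matrix

/-- A subspace `W ⊆ ℝⁿ` is `(C,A)`-invariant if `(A + LC) W ⊆ W` for some
output-injection matrix `L`. -/
def IsCAInvariant {n p : ℕ} (A : Matrix (Fin n) (Fin n) ℝ)
    (C : Matrix (Fin p) (Fin n) ℝ) (W : Submodule ℝ (Fin n → ℝ)) : Prop :=
  ∃ L : Matrix (Fin n) (Fin p) ℝ, ∀ x ∈ W, (A + L * C).mulVec x ∈ W

/-- Easy direction: a `(C,A)`-invariant subspace satisfies `A (W ∩ ker C) ⊆ W`. -/
lemma geom_of_CAInv {n p : ℕ} {A : Matrix (Fin n) (Fin n) ℝ}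
    {C : Matrix (Fin p) (Fin n) ℝ} {W : Submodule ℝ (Fin n → ℝ)}
    (h : IsCAInvariant A C W) :
    ∀ x ∈ W, C.mulVec x = 0 → A.mulVec x ∈ W := by
  obtain ⟨L, hL⟩ := h
  intro x hx hC
  have := hL x hx
  rwa [Matrix.add_mulVec, ← Matrix.mulVec_mulVec, hC, Matrix.mulVec_zero, add_zero] at this

/-- Hard direction: `A (W ∩ ker C) ⊆ W` implies `(C,A)`-invariance. -/
lemma CAInv_of_geom {n p : ℕ} {A : Matrix (Fin n) (Fin n) ℝ}
    {C : Matrix (Fin p) (Fin n) ℝ} {W : Submodule ℝ (Fin n → ℝ)}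
    (h : ∀ x ∈ W, C.mulVec x = 0 → A.mulVec x ∈ W) :
    IsCAInvariant A C W := by
  classical
  set c : (Fin n → ℝ) →ₗ[ℝ] (Fin p → ℝ) := Matrix.mulVecLin C with hc
  set W₀ : Submodule ℝ (Fin n → ℝ) := W ⊓ LinearMap.ker c with hW₀
  -- complement V of W₀ inside W
  obtain ⟨V', hV'⟩ := Submodule.exists_isCompl (Submodule.comap W.subtype W₀)
  set V : Submodule ℝ (Fin n → ℝ) := V'.map W.subtype with hV
  have hVW : V ≤ W := by
    rw [hV]; rintro x ⟨y, _, rfl⟩; exact y.2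
  -- c is injective on V
  have hdisj : ∀ v ∈ V, c v = 0 → v = 0 := by
    intro v hv hcv
    have hvW : v ∈ W := hVW hv
    have hvW₀ : v ∈ W₀ := ⟨hvW, hcv⟩
    obtain ⟨y, hy, rfl⟩ := hv
    have hy0 : y ∈ Submodule.comap W.subtype W₀ := hvW₀
    have : y ∈ (⊥ : Submodule ℝ W) := hV'.disjoint.le_bot ⟨hy0, hy⟩
    rw [Submodule.mem_bot] at this
    simp [this]
  set cV : V →ₗ[ℝ] (Fin p → ℝ) := c.comp V.subtype with hcV
  have hinj : Function.Injective cV := by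
    intro a b hab
    have h0 : c ((a : Fin n → ℝ) - b) = 0 := by
      rw [map_sub, sub_eq_zero]; exact hab
    have := hdisj ((a : Fin n → ℝ) - b) (V.sub_mem a.2 b.2) h0
    exact Subtype.ext (sub_eq_zero.mp this)
  set R : Submodule ℝ (Fin p → ℝ) := LinearMap.range cV with hR
  set e : V ≃ₗ[ℝ] R := LinearEquiv.ofInjective cV hinj with he'
  obtain ⟨R', hR'⟩ := Submodule.exists_isCompl R
  set proj : (Fin p → ℝ) →ₗ[ℝ] R := R.linearProjOfIsCompl R' hR' with hproj
  set ℓ : (Fin p → ℝ) →ₗ[ℝ] (Fin n → ℝ) :=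
    ((-(Matrix.mulVecLin A)).comp (V.subtype.comp e.symm.toLinearMap)).comp proj with hℓ
  refine ⟨LinearMap.toMatrix' ℓ, ?_⟩
  intro x hx
  -- key property: for v ∈ V, ℓ (c v) = - A v
  have key : ∀ v : V, ℓ (c v) = - A.mulVec (v : Fin n → ℝ) := by
    intro v
    have hcv : c v = cV v := rfl
    have hmem : cV v ∈ R := LinearMap.mem_range_self _ _
    have hp : proj (cV v) = ⟨cV v, hmem⟩ :=
      Submodule.linearProjOfIsCompl_apply_left hR' ⟨cV v, hmem⟩
    have he : e.symm ⟨cV v, hmem⟩ = v := by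
      apply e.injective
      rw [LinearEquiv.apply_symm_apply]
      exact Subtype.ext rfl
    simp [hℓ, hcv, hp, he]
  -- decompose x = x₀ + v
  have hsup : W ≤ W₀ ⊔ V := by
    intro w hw
    have : (⟨w, hw⟩ : W) ∈ Submodule.comap W.subtype W₀ ⊔ V' := by
      rw [hV'.sup_eq_top]; trivial
    obtain ⟨a, ha, b, hb, hab⟩ := Submodule.mem_sup.mp this
    refine Submodule.mem_sup.mpr ⟨a, ha, b, ⟨b, hb, rfl⟩, ?_⟩
    exact congrArg Subtype.val hab
  obtain ⟨x₀, hx₀, v, hv, rfl⟩ := Submodule.mem_sup.mp (hsup hx)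
  have hcx₀ : c x₀ = 0 := hx₀.2
  have hmv : ∀ y, (LinearMap.toMatrix' ℓ).mulVec y = ℓ y := by
    intro y
    rw [← Matrix.toLin'_apply, Matrix.toLin'_toMatrix']
  have hA : (A + LinearMap.toMatrix' ℓ * C).mulVec (x₀ + v)
      = A.mulVec x₀ + (A.mulVec v + ℓ (c (x₀ + v))) := by
    rw [Matrix.add_mulVec, ← Matrix.mulVec_mulVec, hmv, Matrix.mulVec_add]
    have : C.mulVec (x₀ + v) = c (x₀ + v) := rfl
    rw [this]
    abel
  rw [hA]
  have hcx : c (x₀ + v) = c v := by rw [map_add, hcx₀, zero_add]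
  have hz : A.mulVec v + ℓ (c (x₀ + v)) = 0 := by
    rw [hcx]
    have hk : ℓ (c v) = - A.mulVec v := key ⟨v, hv⟩
    rw [hk]; abel
  rw [hz, add_zero]
  exact h x₀ hx₀.1 hcx₀

/-- The intersection `W*` of all `(C,A)`-invariant subspaces containing a
fixed subspace `ℬ` is itself `(C,A)`-invariant and contains `ℬ`; hence it is the infimal
element of the class of `(C,A)`-invariant subspaces containing `ℬ`. -/
theorem infimal_CA_invariant_containing (n p : ℕ)
    (A : Matrix (Fin n) (Fin n) ℝ) (C : Matrix (Fin p) (Fin n) ℝ)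
    (B : Submodule ℝ (Fin n → ℝ)) :
    IsCAInvariant A C (sInf {W | IsCAInvariant A C W ∧ B ≤ W}) ∧
      B ≤ sInf {W | IsCAInvariant A C W ∧ B ≤ W} ∧
      ∀ W : Submodule ℝ (Fin n → ℝ), IsCAInvariant A C W → B ≤ W →
        sInf {W | IsCAInvariant A C W ∧ B ≤ W} ≤ W := by
  refine ⟨?_, le_sInf fun W hW => hW.2, fun W hW hBW => sInf_le ⟨hW, hBW⟩⟩
  apply CAInv_of_geom
  intro x hx hcx
  rw [Submodule.mem_sInf] at hx ⊢
  intro W hW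
  exact geom_of_CAInv hW.1 x (hx W hW) hcx
end

section
/- Let A ∈ ℝ^{n×n}, B ∈ ℝ^{n×m}, and let K ⊆ ℝⁿ be a fixed subspace. Define V* to be the sum (subspace supremum) of all (A,B)-invariant subspaces of ℝⁿ contained in K. Then V* is itself (A,B)-invariant and contained in K; consequently V* is the supremal element of the class of (A,B)-invariant subspaces contained in K, i.e., V* contains every (A,B)-invariant subspace contained in K. -/
open Matrix

/-!
The class of `(A,B)`-invariant subspaces is closed under arbitrary sums because it has a
feedback-free description: `V` is `(A,B)`-invariant iff `A V ⊆ V + Im B`, and this condition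
is preserved by sums. Conversely, a feedback is recovered from `A V ⊆ V + Im B` by lifting
`v ↦ [A v]` through the surjection `ℝᵐ → (V + Im B)/V`, `u ↦ [B u]` (vector spaces are
projective), and extending the lift from `V` to the whole space.
-/

/-- A subspace `V ⊆ ℝⁿ` is `(A,B)`-invariant if `(A + BF) V ⊆ V` for some
state-feedback matrix `F`. -/
def IsABInvariant {n m : ℕ} (A : Matrix (Fin n) (Fin n) ℝ)
    (B : Matrix (Fin n) (Fin m) ℝ) (V : Submodule ℝ (Fin n → ℝ)) : Prop :=
  ∃ F : Matrix (Fin m) (Fin n) ℝ, ∀ x ∈ V, (A + B * F).mulVec x ∈ V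

theorem LinearMap.exists_add_comp_mem_of_range_le {K M N P : Type*} [DivisionRing K]
    [AddCommGroup M] [Module K M] [AddCommGroup N] [Module K N] [AddCommGroup P] [Module K P]
    (f : M →ₗ[K] N) (b : P →ₗ[K] N) (V : Submodule K N) (h : range f ≤ V ⊔ range b) :
    ∃ g : M →ₗ[K] P, ∀ x, f x + b (g x) ∈ V := by
  let πb := (V.mkQ ∘ₗ b).rangeRestrict
  have hπf : ∀ x, V.mkQ (f x) ∈ range (V.mkQ ∘ₗ b) := by
    intro x
    obtain ⟨v, hv, y, ⟨p, rfl⟩, hvy⟩ := Submodule.mem_sup.1 (h (mem_range_self f x))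
    refine ⟨p, ?_⟩
    rw [← hvy, comp_apply, map_add, Submodule.mkQ_apply V v,
      (Submodule.Quotient.mk_eq_zero V).2 hv, zero_add]
  obtain ⟨g, hg⟩ := Module.projective_lifting_property πb
    ((V.mkQ ∘ₗ f).codRestrict _ hπf) (surjective_rangeRestrict _)
  refine ⟨-g, fun x => ?_⟩
  have hgx : V.mkQ (b (g x)) = V.mkQ (f x) := congr_arg Subtype.val (LinearMap.congr_fun hg x)
  rw [neg_apply, map_neg, ← sub_eq_add_neg, ← Submodule.Quotient.eq]
  exact hgx.symm

section

variable {n m : ℕ} {A : Matrix (Fin n) (Fin n) ℝ} {B : Matrix (Fin n) (Fin m) ℝ}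

theorem isABInvariant_iff_le_comap {V : Submodule ℝ (Fin n → ℝ)} :
    IsABInvariant A B V ↔ V ≤ (V ⊔ LinearMap.range B.mulVecLin).comap A.mulVecLin := by
  constructor
  · rintro ⟨F, hF⟩ x hx
    have hAx : A *ᵥ x = (A + B * F) *ᵥ x - B *ᵥ (F *ᵥ x) := by
      rw [add_mulVec, ← mulVec_mulVec, add_sub_cancel_right]
    rw [Submodule.mem_comap, mulVecLin_apply, hAx]
    exact Submodule.sub_mem _ (Submodule.mem_sup_left (hF x hx))
      (Submodule.mem_sup_right (LinearMap.mem_range_self B.mulVecLin _))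
  · intro hV
    have hrange : LinearMap.range (A.mulVecLin ∘ₗ V.subtype) ≤
        V ⊔ LinearMap.range B.mulVecLin := by
      rintro _ ⟨⟨x, hx⟩, rfl⟩
      exact hV hx
    obtain ⟨g, hg⟩ := (A.mulVecLin ∘ₗ V.subtype).exists_add_comp_mem_of_range_le
      B.mulVecLin V hrange
    obtain ⟨G, hG⟩ := LinearMap.exists_extend g
    refine ⟨LinearMap.toMatrix' G, fun x hx => ?_⟩
    have hGx : G x = g ⟨x, hx⟩ := LinearMap.congr_fun hG ⟨x, hx⟩
    rw [add_mulVec, ← mulVec_mulVec, LinearMap.toMatrix'_mulVec, hGx]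
    exact hg ⟨x, hx⟩

theorem isABInvariant_sSup {S : Set (Submodule ℝ (Fin n → ℝ))}
    (hS : ∀ V ∈ S, IsABInvariant A B V) : IsABInvariant A B (sSup S) :=
  isABInvariant_iff_le_comap.2 <| sSup_le fun V hV =>
    (isABInvariant_iff_le_comap.1 (hS V hV)).trans
      (Submodule.comap_mono (sup_le_sup_right (le_sSup hV) _))

end

/-- The sum `V*` of all `(A,B)`-invariant subspaces contained in a fixed
subspace `K` is itself `(A,B)`-invariant and contained in `K`; hence it is the supremal
element of the class of `(A,B)`-invariant subspaces contained in `K`. -/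
theorem supremal_AB_invariant_contained (n m : ℕ)
    (A : Matrix (Fin n) (Fin n) ℝ) (B : Matrix (Fin n) (Fin m) ℝ)
    (K : Submodule ℝ (Fin n → ℝ)) :
    IsABInvariant A B (sSup {V | IsABInvariant A B V ∧ V ≤ K}) ∧
      sSup {V | IsABInvariant A B V ∧ V ≤ K} ≤ K ∧
      ∀ V : Submodule ℝ (Fin n → ℝ), IsABInvariant A B V → V ≤ K →
        V ≤ sSup {V | IsABInvariant A B V ∧ V ≤ K} :=
  ⟨isABInvariant_sSup fun _ hV => hV.1, sSup_le fun _ hV => hV.2,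
    fun _ hV hVK => le_sSup ⟨hV, hVK⟩⟩
end

section
/- Let 𝓛 ∈ ℝ^{N×N} be symmetric positive semidefinite with kernel exactly the span of the all-ones vector 1_N (e.g., the Laplacian of a connected undirected graph). For each i ∈ {1,…,N}, let W_i ∈ ℝ^{n×w_i} be a matrix with orthonormal columns (W_iᵀ W_i = I_{w_i}), and let W = diag(W₁,…,W_N) ∈ ℝ^{nN×(w₁+⋯+w_N)} be the block-diagonal matrix. If the column spaces satisfy ⋂_{i=1}^N Im W_i = {0}, then the matrix Q := Wᵀ (𝓛 ⊗ Iₙ) W is symmetric positive definite. -/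
/-!
`Q = Wᵀ M W` with `M = 𝓛 ⊗ Iₙ` positive semidefinite, so `Q` is positive semidefinite and
`xᵀ Q x = 0` forces `M (W x) = 0`. Then every slice `k ↦ (W x)(k, j)` lies in `ker 𝓛`, i.e. is
constant, so `W x` stacks `N` copies of one vector `c`, the `i`-th copy being `W_i x_i ∈ Im W_i`.
Hence `c ∈ ⋂ᵢ Im W_i = 0`, and `W x = 0` gives `x = 0` because each `W_i` has orthonormal columns.
-/

open Matrix Kronecker

/-- The block-diagonal matrix `diag(W₁,…,W_N)` whose `i`-th diagonal block is
`Wb i ∈ ℝ^{n×(w i)}`, with rows indexed by `Fin N × Fin n` (to match the Kronecker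
product `𝓛 ⊗ Iₙ`) and columns indexed by `Σ i, Fin (w i)`. -/
def blockDiagW {N n : ℕ} {w : Fin N → ℕ} (Wb : (i : Fin N) → Matrix (Fin n) (Fin (w i)) ℝ) :
    Matrix (Fin N × Fin n) ((i : Fin N) × Fin (w i)) ℝ :=
  Matrix.of fun p q => if p.1 = q.1 then Wb q.1 p.2 q.2 else 0

open scoped ComplexOrder

namespace Matrix

theorem PosSemidef.posDef_conjTranspose_mul_mul {𝕜 m n : Type*} [RCLike 𝕜] [Fintype m]
    [Fintype n] {A : Matrix n n 𝕜} (hA : A.PosSemidef) {B : Matrix n m 𝕜}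
    (hB : ∀ x, A *ᵥ (B *ᵥ x) = 0 → x = 0) : (Bᴴ * A * B).PosDef := by
  refine .of_dotProduct_mulVec_pos (isHermitian_conjTranspose_mul_mul B hA.1) fun x hx => ?_
  have hquad : star x ⬝ᵥ (Bᴴ * A * B) *ᵥ x = star (B *ᵥ x) ⬝ᵥ A *ᵥ (B *ᵥ x) := by
    simp only [star_mulVec, dotProduct_mulVec, vecMul_vecMul, ← mulVec_mulVec]
  rw [hquad]
  refine (hA.dotProduct_mulVec_nonneg _).lt_of_ne fun h => hx (hB x ?_)
  exact (hA.dotProduct_mulVec_zero_iff _).1 h.symm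

theorem mulVec_injective_of_mul_eq_one {R m n : Type*} [Semiring R] [Fintype m] [Fintype n]
    [DecidableEq n] {A : Matrix m n R} {B : Matrix n m R} (h : B * A = 1) :
    Function.Injective A.mulVec :=
  Function.LeftInverse.injective (g := (B *ᵥ ·)) fun x => by
    simp only [mulVec_mulVec, h, one_mulVec]

theorem kronecker_one_mulVec_apply {R m n : Type*} [Semiring R] [Fintype m] [Fintype n]
    [DecidableEq n] (L : Matrix m m R) (y : m × n → R) (i : m) (j : n) :
    ((L ⊗ₖ (1 : Matrix n n R)) *ᵥ y) (i, j) = (L *ᵥ fun k => y (k, j)) i := by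
  simp only [mulVec, dotProduct, kroneckerMap_apply, one_apply, mul_ite, mul_one, mul_zero,
    ite_mul, zero_mul, ← Finset.univ_product_univ, Finset.sum_product, Finset.sum_ite_eq]
  simp

theorem kronecker_one_mulVec_eq_zero_iff {R m n : Type*} [Semiring R] [Fintype m] [Fintype n]
    [DecidableEq n] (L : Matrix m m R) (y : m × n → R) :
    (L ⊗ₖ (1 : Matrix n n R)) *ᵥ y = 0 ↔ ∀ j, (L *ᵥ fun k => y (k, j)) = 0 := by
  simp only [funext_iff, Prod.forall, kronecker_one_mulVec_apply, Pi.zero_apply]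
  exact forall_comm

end Matrix

section blockDiagW

variable {N n : ℕ} {w : Fin N → ℕ} (Wb : (i : Fin N) → Matrix (Fin n) (Fin (w i)) ℝ)

theorem blockDiagW_mulVec_apply (x : ((i : Fin N) × Fin (w i)) → ℝ) (i : Fin N) (j : Fin n) :
    (blockDiagW Wb *ᵥ x) (i, j) = (Wb i *ᵥ fun q => x ⟨i, q⟩) j := by
  simp only [blockDiagW, mulVec, dotProduct, of_apply, ite_mul, zero_mul,
    ← Finset.univ_sigma_univ, Finset.sum_sigma, Finset.sum_ite_irrel, Finset.sum_const_zero]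
  rw [Finset.sum_eq_single_of_mem i (Finset.mem_univ _) fun k _ hk => if_neg (Ne.symm hk)]
  simp

theorem blockDiagW_mulVec_injective (hWb : ∀ i, Function.Injective (Wb i).mulVec) :
    Function.Injective (blockDiagW Wb).mulVec := by
  refine (injective_iff_map_eq_zero (blockDiagW Wb).mulVecLin).2 fun x hx => ?_
  ext ⟨i, q⟩
  have hi : (Wb i *ᵥ fun q => x ⟨i, q⟩) = 0 := by
    ext j
    rw [← blockDiagW_mulVec_apply]
    exact congrFun hx (i, j)
  exact congrFun ((hWb i).eq_iff' (mulVec_zero _) |>.1 hi) q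

end blockDiagW

/-- Let `𝓛` be symmetric positive semidefinite with kernel exactly the
span of the all-ones vector (e.g. the Laplacian of a connected graph), let each `W_i`
have orthonormal columns, and let `W = diag(W₁,…,W_N)`. If `⋂ᵢ Im W_i = {0}`, then
`Q = Wᵀ (𝓛 ⊗ Iₙ) W` is symmetric positive definite. -/
theorem Q_posDef_of_joint_condition (N n : ℕ) (w : Fin N → ℕ)
    (L : Matrix (Fin N) (Fin N) ℝ)
    (hL : L.PosSemidef)
    (hker : ∀ x : Fin N → ℝ, L.mulVec x = 0 ↔ ∃ c : ℝ, x = fun _ => c)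
    (Wb : (i : Fin N) → Matrix (Fin n) (Fin (w i)) ℝ)
    (hortho : ∀ i, (Wb i)ᵀ * Wb i = 1)
    (hjoint : (⨅ i, LinearMap.range (Wb i).mulVecLin) = ⊥) :
    ((blockDiagW Wb)ᵀ * (L ⊗ₖ (1 : Matrix (Fin n) (Fin n) ℝ)) * blockDiagW Wb).PosDef := by
  have hinj : Function.Injective (blockDiagW Wb).mulVec :=
    blockDiagW_mulVec_injective Wb fun i => mulVec_injective_of_mul_eq_one (hortho i)
  rw [← conjTranspose_eq_transpose_of_trivial]
  refine (hL.kronecker .one).posDef_conjTranspose_mul_mul fun x hx => ?_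
  obtain ⟨c, hc⟩ : ∃ c : Fin n → ℝ, ∀ i j, (blockDiagW Wb *ᵥ x) (i, j) = c j := by
    choose c hc using fun j => (hker _).1 ((kronecker_one_mulVec_eq_zero_iff _ _).1 hx j)
    exact ⟨c, fun i j => congrFun (hc j) i⟩
  have hc0 : c = 0 := by
    rw [← Submodule.mem_bot ℝ, ← hjoint, Submodule.mem_iInf]
    refine fun i => ⟨fun q => x ⟨i, q⟩, funext fun j => ?_⟩
    rw [mulVecLin_apply, ← blockDiagW_mulVec_apply, hc]
  exact (hinj.eq_iff' (mulVec_zero _)).1 (funext fun p => by rw [hc, hc0]; rfl)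
end

section
/- Let M ∈ ℝ^{n×n} be a matrix all of whose complex eigenvalues have strictly negative real part (a Hurwitz matrix), and let x : ℝ → ℝⁿ be a differentiable function satisfying x'(t) = M x(t) for all t ≥ 0. Then x(t) → 0 as t → ∞. -/
/-!
Let `N` be the complexification of `M` and `z` the trajectory `x` viewed in `ℂⁿ`. Then `z' = N z`,
and since the vector field `N` is Lipschitz, uniqueness of solutions gives
`z t = exp (t N) z 0` for `t ≥ 0`. Decompose `z 0` into generalized eigenvectors of `N`: on a `w`
with `(N - μ)^K w = 0` the exponential series truncates,
`exp (t N) w = e^{t μ} ∑_{k < K} t^k / k! (N - μ)^k w`, and every term tends to `0` because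
`μ` is a root of the characteristic polynomial, so `Re μ < 0`. Taking real parts, `x t → 0`.
-/

open Matrix Filter NormedSpace Topology Finset
open scoped Nat Matrix.Norms.Operator

section

variable {ι : Type*} [Fintype ι] [DecidableEq ι]

section RCLike

variable {𝕂 : Type*} [RCLike 𝕂]

theorem Matrix.hasDerivAt_exp_smul_mulVec (N : Matrix ι ι 𝕂) (v : ι → 𝕂) (t : ℝ) :
    HasDerivAt (fun s : ℝ => exp (s • N) *ᵥ v) (N *ᵥ (exp (t • N) *ᵥ v)) t := by
  let L : Matrix ι ι 𝕂 →L[ℝ] ι → 𝕂 :=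
    (mulVec.addMonoidHomLeft v).toRealLinearMap (continuous_id.matrix_mulVec continuous_const)
  rw [mulVec_mulVec]
  exact L.hasFDerivAt.comp_hasDerivAt t (hasDerivAt_exp_smul_const' N t)

theorem Matrix.eq_exp_smul_mulVec_of_hasDerivAt (N : Matrix ι ι 𝕂) {z : ℝ → ι → 𝕂}
    (hz : ∀ t, 0 ≤ t → HasDerivAt z (N *ᵥ z t) t) {T : ℝ} (hT : 0 ≤ T) :
    z T = exp (T • N) *ᵥ z 0 := by
  have hlip := (LinearMap.toContinuousLinearMap N.mulVecLin).lipschitz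
  have hexp (t : ℝ) := N.hasDerivAt_exp_smul_mulVec (z 0) t
  refine ODE_solution_unique (v := fun _ => (N *ᵥ ·)) (fun _ => hlip)
    (HasDerivAt.continuousOn fun t ht => hz t ht.1) (fun t ht => (hz t ht.1).hasDerivWithinAt)
    (HasDerivAt.continuousOn fun t _ => hexp t) (fun t _ => (hexp t).hasDerivWithinAt)
    (by simp) ⟨hT, le_rfl⟩

theorem Matrix.exp_mulVec_eq_sum_of_pow_mulVec_eq_zero {S : Matrix ι ι 𝕂} {w : ι → 𝕂} {K : ℕ}
    (hw : S ^ K *ᵥ w = 0) :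
    exp S *ᵥ w = ∑ k ∈ range K, (k ! : 𝕂)⁻¹ • (S ^ k *ᵥ w) := by
  have hsum := (exp_series_hasSum_exp' (𝕂 := 𝕂) S).map (mulVec.addMonoidHomLeft w)
    (continuous_id.matrix_mulVec continuous_const)
  refine hsum.unique (hasSum_sum_of_ne_finset_zero (s := range K) fun k hk => ?_) |>.trans ?_
  · have hk : K ≤ k := by simpa using hk
    simp [mulVec.addMonoidHomLeft, smul_mulVec, ← pow_sub_mul_pow S hk, ← mulVec_mulVec, hw]
  · simp [mulVec.addMonoidHomLeft, smul_mulVec]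

theorem Matrix.exp_mulVec_eq_of_pow_sub_smul_mulVec_eq_zero {A : Matrix ι ι 𝕂} {μ : 𝕂}
    {w : ι → 𝕂} {K : ℕ} (hw : (A - μ • 1) ^ K *ᵥ w = 0) :
    exp A *ᵥ w = exp μ • ∑ k ∈ range K, (k ! : 𝕂)⁻¹ • ((A - μ • 1) ^ k *ᵥ w) := by
  have hA : algebraMap 𝕂 _ μ + (A - μ • 1) = A := by
    rw [Algebra.algebraMap_eq_smul_one, add_sub_cancel]
  have hexp : exp (algebraMap 𝕂 (Matrix ι ι 𝕂) μ) = algebraMap 𝕂 _ (exp μ) :=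
    (algebraMap_exp_comm μ).symm
  conv_lhs => rw [← hA]
  rw [exp_add_of_commute _ _ (Algebra.commute_algebraMap_left _ _), hexp, ← mulVec_mulVec,
    Algebra.algebraMap_eq_smul_one, smul_mulVec, one_mulVec,
    exp_mulVec_eq_sum_of_pow_mulVec_eq_zero hw]

end RCLike

theorem Matrix.isRoot_charpoly_of_mem_maxGenEigenspace {K : Type*} [Field K] {N : Matrix ι ι K}
    {μ : K} {w : ι → K} (hw : w ∈ Module.End.maxGenEigenspace (toLinAlgEquiv' N) μ)
    (hw0 : w ≠ 0) : N.charpoly.IsRoot μ := by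
  rw [← Matrix.charpoly_toLin', ← Module.End.hasEigenvalue_iff_isRoot_charpoly]
  have : Module.End.HasUnifEigenvalue (toLinAlgEquiv' N) μ ⊤ :=
    (Submodule.ne_bot_iff _).2 ⟨w, hw, hw0⟩
  exact (Module.End.hasUnifEigenvalue_iff_hasUnifEigenvalue_one WithTop.top_pos).1 this

theorem Complex.tendsto_ofReal_pow_mul_exp_of_re_neg {μ : ℂ} (hμ : μ.re < 0) (k : ℕ) :
    Tendsto (fun t : ℝ => (t : ℂ) ^ k * Complex.exp (t * μ)) atTop (𝓝 0) := by
  rw [tendsto_zero_iff_norm_tendsto_zero]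
  refine (tendsto_rpow_mul_exp_neg_mul_atTop_nhds_zero k (-μ.re) (neg_pos.2 hμ)).congr' ?_
  filter_upwards [eventually_ge_atTop 0] with t ht
  simp [Complex.norm_exp, abs_of_nonneg ht, mul_comm]

theorem Matrix.tendsto_exp_smul_mulVec_of_pow_sub_smul_mulVec_eq_zero {N : Matrix ι ι ℂ} {μ : ℂ}
    (hμ : μ.re < 0) {w : ι → ℂ} {K : ℕ} (hw : (N - μ • 1) ^ K *ᵥ w = 0) :
    Tendsto (fun t : ℝ => exp (t • N) *ᵥ w) atTop (𝓝 0) := by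
  have hexp (t : ℝ) : exp (t • N) *ᵥ w = ∑ k ∈ range K,
      ((k ! : ℂ)⁻¹ * ((t : ℂ) ^ k * Complex.exp (t * μ))) • ((N - μ • 1) ^ k *ᵥ w) := by
    have hS : t • N - ((t : ℂ) * μ) • 1 = (t : ℂ) • (N - μ • 1) := by
      rw [smul_sub, smul_smul, Complex.coe_smul]
    rw [exp_mulVec_eq_of_pow_sub_smul_mulVec_eq_zero (K := K)
      (by rw [hS, smul_pow, smul_mulVec, hw, smul_zero]), hS, Finset.smul_sum]
    refine Finset.sum_congr rfl fun k _ => ?_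
    rw [smul_pow, smul_mulVec, smul_smul, smul_smul, ← Complex.exp_eq_exp_ℂ]
    ring_nf
  simp_rw [hexp]
  simpa using tendsto_finsetSum (range K) fun k _ =>
    ((Complex.tendsto_ofReal_pow_mul_exp_of_re_neg hμ k).const_mul _).smul_const
      ((N - μ • 1) ^ k *ᵥ w)

theorem Matrix.tendsto_exp_smul_mulVec_of_forall_isRoot_charpoly_re_neg {N : Matrix ι ι ℂ}
    (hN : ∀ μ : ℂ, N.charpoly.IsRoot μ → μ.re < 0) (v : ι → ℂ) :
    Tendsto (fun t : ℝ => exp (t • N) *ᵥ v) atTop (𝓝 0) := by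
  have hv : v ∈ ⨆ μ, Module.End.maxGenEigenspace (toLinAlgEquiv' N) μ := by
    rw [Module.End.iSup_maxGenEigenspace_eq_top]; trivial
  refine Submodule.iSup_induction _ hv
    (motive := fun v => Tendsto (fun t : ℝ => exp (t • N) *ᵥ v) atTop (𝓝 0))
    (fun μ w hw => ?_) (by simp) fun w w' hw hw' => by simpa [mulVec_add] using hw.add hw'
  rcases eq_or_ne w 0 with rfl | hw0
  · simp
  obtain ⟨K, hK⟩ := (Module.End.mem_maxGenEigenspace _ _ _).1 hw
  refine tendsto_exp_smul_mulVec_of_pow_sub_smul_mulVec_eq_zero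
    (hN μ (isRoot_charpoly_of_mem_maxGenEigenspace hw hw0)) (K := K) ?_
  rwa [← map_one (toLinAlgEquiv' (n := ι) (R := ℂ)), ← map_smul, ← map_sub, ← map_pow,
    toLinAlgEquiv'_apply] at hK

end

theorem hurwitz_linear_ode_tendsto_zero_general (n : ℕ)
    (M : Matrix (Fin n) (Fin n) ℝ)
    (hM : ∀ μ : ℂ, (M.map (Complex.ofReal)).charpoly.IsRoot μ → μ.re < 0)
    (x : ℝ → Fin n → ℝ)
    (hode : ∀ t : ℝ, 0 ≤ t → HasDerivAt x (M.mulVec (x t)) t) :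
    Tendsto x atTop (nhds 0) := by
  set z : ℝ → Fin n → ℂ := fun t i => x t i
  have hz (t : ℝ) (ht : 0 ≤ t) : HasDerivAt z (M.map Complex.ofReal *ᵥ z t) t := by
    refine hasDerivAt_pi.2 fun i => ?_
    have := (hasDerivAt_pi.1 (hode t ht) i).ofReal_comp
    rwa [← Complex.ofRealHom_eq_coe, Complex.ofRealHom.map_mulVec] at this
  have hzlim : Tendsto z atTop (𝓝 0) :=
    (tendsto_exp_smul_mulVec_of_forall_isRoot_charpoly_re_neg hM (z 0)).congr'
      (eventually_ge_atTop 0 |>.mono fun t ht => (eq_exp_smul_mulVec_of_hasDerivAt _ hz ht).symm)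
  rw [tendsto_pi_nhds] at hzlim ⊢
  intro i
  simpa [z, Function.comp_def] using (Complex.continuous_re.tendsto 0).comp (hzlim i)

/-- If `M` is Hurwitz (every complex root of its characteristic
polynomial has strictly negative real part) and `x : ℝ → ℝⁿ` is a differentiable
solution of `x' = M x` on `t ≥ 0`, then `x(t) → 0` as `t → ∞`. -/
theorem hurwitz_linear_ode_tendsto_zero (n : ℕ)
    (M : Matrix (Fin n) (Fin n) ℝ)
    (hM : ∀ μ : ℂ, (M.map (Complex.ofReal)).charpoly.IsRoot μ → μ.re < 0)
    (x : ℝ → Fin n → ℝ)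
    (hx : Differentiable ℝ x)
    (hode : ∀ t : ℝ, 0 ≤ t → HasDerivAt x (M.mulVec (x t)) t) :
    Tendsto x atTop (nhds 0) :=
  hurwitz_linear_ode_tendsto_zero_general n M hM x hode
end

section
/- Let Q ∈ ℝ^{k×k} be symmetric positive definite with smallest eigenvalue λ_min(Q) > 0, let Ã ∈ ℝ^{k×k}, let χ, γ, δ > 0, and let ζ, d ∈ ℝᵏ with ‖d‖_∞ ≤ δ. Then 2 ζᵀ (Ã Q⁻¹ − χ I_k) ζ + 2 dᵀ ζ − 2 γ Σ_{j=1}^k ζ_j · sign(ζ_j) ≤ −2 (χ − ‖Ã‖₂ / λ_min(Q)) ‖ζ‖₂² − 2 (γ − δ) ‖ζ‖₁, where sign(0) = 0. In particular, if χ > ‖Ã‖₂ / λ_min(Q) and γ > δ, then the left-hand side is strictly negative for every ζ ≠ 0. -/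
open Matrix
open scoped Matrix.Norms.L2Operator

/-!
Every eigenvalue of the symmetric matrix `Q` is at least `λ`, so `λ‖w‖² ≤ wᵀQw ≤ ‖w‖‖Qw‖`;
for `w = Q⁻¹ζ` this gives `‖w‖ ≤ ‖ζ‖/λ`, and Cauchy–Schwarz then bounds
`ζᵀÃQ⁻¹ζ = ζᵀÃw` by `‖Ã‖₂‖ζ‖²/λ`. The remaining terms are handled by `ζⱼ sign ζⱼ = |ζⱼ|` and the
Hölder bound `dᵀζ ≤ ‖d‖_∞‖ζ‖₁`.
-/

theorem Real.self_mul_sign (x : ℝ) : x * Real.sign x = |x| := by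
  rcases lt_trichotomy x 0 with hx | rfl | hx
  · rw [Real.sign_of_neg hx, abs_of_neg hx, mul_neg_one]
  · simp
  · rw [Real.sign_of_pos hx, abs_of_pos hx, mul_one]

theorem mul_norm_le_norm_of_mul_norm_sq_le_inner {E : Type*} [NormedAddCommGroup E]
    [InnerProductSpace ℝ E] {c : ℝ} {x y : E} (h : c * ‖x‖ ^ 2 ≤ inner ℝ x y) :
    c * ‖x‖ ≤ ‖y‖ := by
  rcases (norm_nonneg x).eq_or_lt with hx | hx
  · simp [← hx]
  · refine le_of_mul_le_mul_right ?_ hx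
    calc c * ‖x‖ * ‖x‖ = c * ‖x‖ ^ 2 := by ring
      _ ≤ ‖x‖ * ‖y‖ := h.trans (real_inner_le_norm x y)
      _ = ‖y‖ * ‖x‖ := mul_comm _ _

namespace Matrix

variable {m n : Type*} [Fintype m] [Fintype n]

theorem hasEigenvalue_mulVecLin_iff_mem_spectrum [DecidableEq n] {A : Matrix n n ℝ} {r : ℝ} :
    Module.End.HasEigenvalue A.mulVecLin r ↔ r ∈ spectrum ℝ A := by
  rw [Module.End.hasEigenvalue_iff_mem_spectrum, ← toLin'_apply', spectrum_toLin']

open scoped MatrixOrder in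
theorem IsHermitian.mul_dotProduct_self_le [DecidableEq n] {A : Matrix n n ℝ}
    (hA : A.IsHermitian) {c : ℝ} (hc : ∀ r ∈ spectrum ℝ A, c ≤ r) (x : n → ℝ) :
    c * (x ⬝ᵥ x) ≤ x ⬝ᵥ A *ᵥ x := by
  have hle : algebraMap ℝ _ c ≤ A := (algebraMap_le_iff_le_spectrum hA.isSelfAdjoint).2 hc
  simpa [Algebra.algebraMap_eq_smul_one, sub_mulVec, smul_mulVec] using
    (le_iff.1 hle).dotProduct_mulVec_nonneg x

theorem dotProduct_le_mul_sum_abs {d : n → ℝ} {δ : ℝ} (hd : ∀ j, |d j| ≤ δ) (x : n → ℝ) :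
    d ⬝ᵥ x ≤ δ * ∑ j, |x j| := by
  rw [Finset.mul_sum]
  refine Finset.sum_le_sum fun j _ => ?_
  calc d j * x j ≤ |d j| * |x j| := (le_abs_self _).trans (abs_mul _ _).le
    _ ≤ δ * |x j| := mul_le_mul_of_nonneg_right (hd j) (abs_nonneg _)

theorem dotProduct_eq_inner_toLp (x y : n → ℝ) :
    x ⬝ᵥ y = inner ℝ (WithLp.toLp 2 x) (WithLp.toLp 2 y) := by
  rw [EuclideanSpace.inner_toLp_toLp, star_trivial, dotProduct_comm]

theorem dotProduct_self_eq_norm_toLp_sq (x : n → ℝ) :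
    x ⬝ᵥ x = ‖WithLp.toLp 2 x‖ ^ 2 := by
  rw [dotProduct_eq_inner_toLp, real_inner_self_eq_norm_sq]

theorem dotProduct_mulVec_le_l2_opNorm [DecidableEq n] (B : Matrix m n ℝ) (x : m → ℝ)
    (y : n → ℝ) :
    x ⬝ᵥ B *ᵥ y ≤ ‖WithLp.toLp 2 x‖ * (‖B‖ * ‖WithLp.toLp 2 y‖) := by
  rw [dotProduct_eq_inner_toLp]
  exact (real_inner_le_norm _ _).trans
    (mul_le_mul_of_nonneg_left (B.l2_opNorm_mulVec (WithLp.toLp 2 y)) (norm_nonneg _))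

theorem mul_norm_toLp_le_of_mul_dotProduct_self_le {A : Matrix n n ℝ} {c : ℝ}
    (hA : ∀ x, c * (x ⬝ᵥ x) ≤ x ⬝ᵥ A *ᵥ x) (x : n → ℝ) :
    c * ‖WithLp.toLp 2 x‖ ≤ ‖WithLp.toLp 2 (A *ᵥ x)‖ :=
  mul_norm_le_norm_of_mul_norm_sq_le_inner <| by
    simpa only [dotProduct_self_eq_norm_toLp_sq, dotProduct_eq_inner_toLp] using hA x

theorem dotProduct_mul_inv_mulVec_le [DecidableEq n] {A : Matrix n n ℝ} (hA : IsUnit A)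
    {c : ℝ} (hc : 0 < c) (hcoer : ∀ x, c * (x ⬝ᵥ x) ≤ x ⬝ᵥ A *ᵥ x)
    (B : Matrix n n ℝ) (x : n → ℝ) :
    x ⬝ᵥ (B * A⁻¹) *ᵥ x ≤ ‖B‖ / c * (x ⬝ᵥ x) := by
  set w := A⁻¹ *ᵥ x
  have hw : c * ‖WithLp.toLp 2 w‖ ≤ ‖WithLp.toLp 2 x‖ := by
    simpa [w, mulVec_mulVec, mul_nonsing_inv _ ((isUnit_iff_isUnit_det A).1 hA)] using
      mul_norm_toLp_le_of_mul_dotProduct_self_le hcoer w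
  calc x ⬝ᵥ (B * A⁻¹) *ᵥ x = x ⬝ᵥ B *ᵥ w := by rw [← mulVec_mulVec]
    _ ≤ ‖WithLp.toLp 2 x‖ * (‖B‖ * ‖WithLp.toLp 2 w‖) := B.dotProduct_mulVec_le_l2_opNorm x w
    _ ≤ ‖WithLp.toLp 2 x‖ * (‖B‖ * (‖WithLp.toLp 2 x‖ / c)) := by
      gcongr
      exact (le_div_iff₀' hc).2 hw
    _ = ‖B‖ / c * (x ⬝ᵥ x) := by rw [dotProduct_self_eq_norm_toLp_sq]; ring

end Matrix

theorem lyapunov_derivative_estimate_general (k : ℕ)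
    (Q : Matrix (Fin k) (Fin k) ℝ) (hQ : Q.PosDef)
    (lam : ℝ) (hlampos : 0 < lam)
    (hlam : IsLeast {r : ℝ | Module.End.HasEigenvalue (Matrix.mulVecLin Q) r} lam)
    (Atil : Matrix (Fin k) (Fin k) ℝ)
    (chi gam del : ℝ)
    (zeta d : Fin k → ℝ) (hd : ∀ j, |d j| ≤ del) :
    (2 * (zeta ⬝ᵥ ((Atil * Q⁻¹ - chi • (1 : Matrix (Fin k) (Fin k) ℝ)).mulVec zeta))
        + 2 * (d ⬝ᵥ zeta) - 2 * gam * ∑ j, zeta j * Real.sign (zeta j)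
      ≤ -2 * (chi - ‖Atil‖ / lam) * (zeta ⬝ᵥ zeta) - 2 * (gam - del) * ∑ j, |zeta j|) ∧
    (chi > ‖Atil‖ / lam → gam > del → zeta ≠ 0 →
      2 * (zeta ⬝ᵥ ((Atil * Q⁻¹ - chi • (1 : Matrix (Fin k) (Fin k) ℝ)).mulVec zeta))
        + 2 * (d ⬝ᵥ zeta) - 2 * gam * ∑ j, zeta j * Real.sign (zeta j) < 0) := by
  have hcoer : ∀ y, lam * (y ⬝ᵥ y) ≤ y ⬝ᵥ Q *ᵥ y :=
    hQ.isHermitian.mul_dotProduct_self_le fun r hr =>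
      hlam.2 (hasEigenvalue_mulVecLin_iff_mem_spectrum.2 hr)
  have hquad := dotProduct_mul_inv_mulVec_le hQ.isUnit hlampos hcoer Atil zeta
  have hdz := dotProduct_le_mul_sum_abs hd zeta
  have hexp : zeta ⬝ᵥ (Atil * Q⁻¹ - chi • 1) *ᵥ zeta
      = zeta ⬝ᵥ (Atil * Q⁻¹) *ᵥ zeta - chi * (zeta ⬝ᵥ zeta) := by
    rw [sub_mulVec, dotProduct_sub, smul_mulVec, one_mulVec, dotProduct_smul, smul_eq_mul]
  have hestimate : 2 * (zeta ⬝ᵥ (Atil * Q⁻¹ - chi • 1) *ᵥ zeta) + 2 * (d ⬝ᵥ zeta)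
        - 2 * gam * ∑ j, zeta j * Real.sign (zeta j)
      ≤ -2 * (chi - ‖Atil‖ / lam) * (zeta ⬝ᵥ zeta) - 2 * (gam - del) * ∑ j, |zeta j| := by
    simp only [hexp, Real.self_mul_sign]
    linarith
  refine ⟨hestimate, fun hchi hgam hzeta => hestimate.trans_lt ?_⟩
  have hnorm2 : 0 < zeta ⬝ᵥ zeta := by
    simpa using dotProduct_star_self_pos_iff.2 hzeta
  have hnorm1 : 0 ≤ ∑ j, |zeta j| := Finset.sum_nonneg fun j _ => abs_nonneg _
  linarith [mul_pos (sub_pos.2 hchi) hnorm2, mul_nonneg (sub_nonneg.2 hgam.le) hnorm1]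

/-- **Lyapunov derivative estimate.** Let `Q` be symmetric positive
definite with smallest eigenvalue `lam > 0`, let `Ã` be arbitrary, `χ, γ, δ > 0` and
`‖d‖_∞ ≤ δ`.  Then
`2 ζᵀ(ÃQ⁻¹ − χI)ζ + 2 dᵀζ − 2γ Σⱼ ζⱼ sign(ζⱼ) ≤ −2(χ − ‖Ã‖₂/lam)‖ζ‖₂² − 2(γ−δ)‖ζ‖₁`,
and if `χ > ‖Ã‖₂/lam` and `γ > δ`, the left-hand side is strictly negative whenever
`ζ ≠ 0`.  (Here `‖·‖` on matrices is the spectral norm, via `Matrix.L2OpNorm`.) -/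
theorem lyapunov_derivative_estimate (k : ℕ)
    (Q : Matrix (Fin k) (Fin k) ℝ) (hQ : Q.PosDef)
    (lam : ℝ) (hlampos : 0 < lam)
    (hlam : IsLeast {r : ℝ | Module.End.HasEigenvalue (Matrix.mulVecLin Q) r} lam)
    (Atil : Matrix (Fin k) (Fin k) ℝ)
    (chi gam del : ℝ) (hchi : 0 < chi) (hgam : 0 < gam) (hdel : 0 < del)
    (zeta d : Fin k → ℝ) (hd : ∀ j, |d j| ≤ del) :
    (2 * (zeta ⬝ᵥ ((Atil * Q⁻¹ - chi • (1 : Matrix (Fin k) (Fin k) ℝ)).mulVec zeta))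
        + 2 * (d ⬝ᵥ zeta) - 2 * gam * ∑ j, zeta j * Real.sign (zeta j)
      ≤ -2 * (chi - ‖Atil‖ / lam) * (zeta ⬝ᵥ zeta) - 2 * (gam - del) * ∑ j, |zeta j|) ∧
    (chi > ‖Atil‖ / lam → gam > del → zeta ≠ 0 →
      2 * (zeta ⬝ᵥ ((Atil * Q⁻¹ - chi • (1 : Matrix (Fin k) (Fin k) ℝ)).mulVec zeta))
        + 2 * (d ⬝ᵥ zeta) - 2 * gam * ∑ j, zeta j * Real.sign (zeta j) < 0) :=
  lyapunov_derivative_estimate_general k Q hQ lam hlampos hlam Atil chi gam del zeta d hd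
end
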